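/- Let X be a left-dominant (resp. right-dominant) sequence space, let 1 ≤ p ≤ ∞, and suppose ℓ_p is disjointly finitely representable in X. Then: (1) X satisfies a lower (resp. upper) p-estimate for disjoint vectors; (2) there is a constant K so that for every n ∈ ℕ there exists N ∈ ℕ such that the tail space X_N = {x ∈ X : x(k) = 0 for k ≤ N} satisfies an upper (resp. lower) p-estimate with constant K for any n pairwise disjointly supported vectors. -/
import Mathlib


open Function Filter
open scoped BigOperators ENNReal

noncomputable section

namespace CK

/-- The formal (finite-support) linear combination `∑ᶠ i, a i • e i`. -/
def vecSum {X : Type*} [NormedAddCommGroup X] [NormedSpace ℝ X] (e : ℕ → X) (a : ℕ → ℝ) : X :=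
  ∑ᶠ i, a i • e i

/-- `u` is an unconditional basis of `X`: every vector has a unique unconditional
(i.e. unordered, in the sense of `HasSum`) expansion along `u`. -/
def IsUnconditionalBasis {ι : Type*} {X : Type*} [NormedAddCommGroup X] [NormedSpace ℝ X]
    (u : ι → X) : Prop :=
  ∀ x : X, ∃! a : ι → ℝ, HasSum (fun i => a i • u i) x

/-- Two systems of vectors are equivalent: the formal identity between finite linear
combinations is bounded both ways (hence extends to an isomorphism of closed spans). -/
def BasisEquiv {ι : Type*} {X Y : Type*} [NormedAddCommGroup X] [NormedSpace ℝ X]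
    [NormedAddCommGroup Y] [NormedSpace ℝ Y] (u : ι → X) (v : ι → Y) : Prop :=
  ∃ c C : ℝ, 0 < c ∧ ∀ (a : ι → ℝ) (s : Finset ι),
    c * ‖∑ i ∈ s, a i • u i‖ ≤ ‖∑ i ∈ s, a i • v i‖ ∧
      ‖∑ i ∈ s, a i • v i‖ ≤ C * ‖∑ i ∈ s, a i • u i‖

/-- Permutative equivalence of two systems of vectors. -/
def PermutativelyEquiv {ι : Type*} {X Y : Type*} [NormedAddCommGroup X] [NormedSpace ℝ X]
    [NormedAddCommGroup Y] [NormedSpace ℝ Y] (u : ι → X) (v : ι → Y) : Prop :=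
  ∃ π : Equiv.Perm ι, BasisEquiv u (fun i => v (π i))

/-- `X` has a unique unconditional basis: any two normalized unconditional bases are
permutatively equivalent. -/
def HasUniqueUnconditionalBasis (X : Type*) [NormedAddCommGroup X] [NormedSpace ℝ X] : Prop :=
  ∀ u v : ℕ → X, IsUnconditionalBasis u → IsUnconditionalBasis v →
    (∀ n, ‖u n‖ = 1) → (∀ n, ‖v n‖ = 1) → PermutativelyEquiv u v

/-- The closed linear span of a sequence. -/
def spanCl {X : Type*} [NormedAddCommGroup X] [NormedSpace ℝ X] (u : ℕ → X) : Submodule ℝ X :=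
  (Submodule.span ℝ (Set.range u)).topologicalClosure

/-- The members of a sequence, as elements of their closed linear span. -/
def inSpanCl {X : Type*} [NormedAddCommGroup X] [NormedSpace ℝ X] (u : ℕ → X) (n : ℕ) :
    ↥(spanCl u) :=
  ⟨u n, (Submodule.span ℝ (Set.range u)).le_topologicalClosure (Submodule.subset_span ⟨n, rfl⟩)⟩

/-- `u` is an unconditional basic sequence: it is an unconditional basis of its closed span. -/
def IsUncondBasicSeq {X : Type*} [NormedAddCommGroup X] [NormedSpace ℝ X] (u : ℕ → X) : Prop :=
  IsUnconditionalBasis (inSpanCl u)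

/-- The closed span of `u` is the range of a bounded linear projection. -/
def IsComplementedSeq {X : Type*} [NormedAddCommGroup X] [NormedSpace ℝ X] (u : ℕ → X) : Prop :=
  ∃ P : X →L[ℝ] X, P.comp P = P ∧ LinearMap.range (P : X →ₗ[ℝ] X) = spanCl u

/-- A finite linear combination of the `f j`, as an element of the closed span. -/
def spanElt {X : Type*} [NormedAddCommGroup X] [NormedSpace ℝ X] (f : ℕ → X) (a : ℕ → ℝ)
    (s : Finset ℕ) : ↥(spanCl f) :=
  ⟨∑ j ∈ s, a j • f j, by
    apply (Submodule.span ℝ (Set.range f)).le_topologicalClosure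
    exact Submodule.sum_mem _ fun j _ => Submodule.smul_mem _ _ (Submodule.subset_span ⟨j, rfl⟩)⟩

/-- The lattice (in the coordinatewise order induced by the basic sequence `f`) given by the
closed span of `f` is sufficiently lattice Euclidean: uniformly complemented lattice copies of
`ℓ₂ⁿ`, the projections being realized by operators `S, T` with `S ∘ T = id`, `‖S‖‖T‖ ≤ M` and
`S` a lattice homomorphism (expressed coordinatewise on finite combinations of the `f j`). -/
def SuffLatticeEuclideanSeq {X : Type*} [NormedAddCommGroup X] [NormedSpace ℝ X]
    (f : ℕ → X) : Prop :=
  ∃ M : ℝ, ∀ n : ℕ, ∃ (S : ↥(spanCl f) →L[ℝ] EuclideanSpace ℝ (Fin n))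
    (T : EuclideanSpace ℝ (Fin n) →L[ℝ] ↥(spanCl f)),
    (∀ v, S (T v) = v) ∧ ‖S‖ * ‖T‖ ≤ M ∧
    ∀ (a b : ℕ → ℝ) (s : Finset ℕ) (i : Fin n),
      S (spanElt f (fun j => max (a j) (b j)) s) i =
        max (S (spanElt f a s) i) (S (spanElt f b s) i)

/-- The canonical basis of the square `Z ⊕ Z`:
`(u 0, 0), (0, u 0), (u 1, 0), (0, u 1), …`. -/
def squareBasis {X : Type*} [NormedAddCommGroup X] [NormedSpace ℝ X] (u : ℕ → X) : ℕ → X × X :=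
  fun k => if Even k then (u (k / 2), 0) else (0, u (k / 2))

/-- The system `e` is left-dominant with constant `γ`. -/
def LeftDominantWith {X : Type*} [NormedAddCommGroup X] [NormedSpace ℝ X]
    (e : ℕ → X) (γ : ℝ) : Prop :=
  ∀ (n : ℕ) (u v : Fin n → ℕ → ℝ),
    (∀ k, (Function.support (u k)).Finite) → (∀ k, (Function.support (v k)).Finite) →
    (Pairwise fun k l => Disjoint (Function.support (u k)) (Function.support (u l))) →
    (Pairwise fun k l => Disjoint (Function.support (v k)) (Function.support (v l))) →
    (∀ k, ∀ i ∈ Function.support (u k), ∀ j ∈ Function.support (v k), i < j) →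
    (∀ k, ‖vecSum e (v k)‖ ≤ ‖vecSum e (u k)‖) →
    ‖vecSum e (fun i => ∑ k, v k i)‖ ≤ γ * ‖vecSum e (fun i => ∑ k, u k i)‖

/-- The system `e` is right-dominant with constant `γ`. -/
def RightDominantWith {X : Type*} [NormedAddCommGroup X] [NormedSpace ℝ X]
    (e : ℕ → X) (γ : ℝ) : Prop :=
  ∀ (n : ℕ) (u v : Fin n → ℕ → ℝ),
    (∀ k, (Function.support (u k)).Finite) → (∀ k, (Function.support (v k)).Finite) →
    (Pairwise fun k l => Disjoint (Function.support (u k)) (Function.support (u l))) →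
    (Pairwise fun k l => Disjoint (Function.support (v k)) (Function.support (v l))) →
    (∀ k, ∀ i ∈ Function.support (u k), ∀ j ∈ Function.support (v k), i < j) →
    (∀ k, ‖vecSum e (u k)‖ ≤ ‖vecSum e (v k)‖) →
    ‖vecSum e (fun i => ∑ k, u k i)‖ ≤ γ * ‖vecSum e (fun i => ∑ k, v k i)‖

def IsLeftDominant {X : Type*} [NormedAddCommGroup X] [NormedSpace ℝ X] (e : ℕ → X) : Prop :=
  ∃ γ : ℝ, 1 ≤ γ ∧ LeftDominantWith e γ

def IsRightDominant {X : Type*} [NormedAddCommGroup X] [NormedSpace ℝ X] (e : ℕ → X) : Prop :=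
  ∃ γ : ℝ, 1 ≤ γ ∧ RightDominantWith e γ

/-- The norm of the unit vector basis of `ℓ_p^n` (`p = ∞` giving the sup norm). -/
def lpNormFin (p : ℝ≥0∞) {n : ℕ} (c : Fin n → ℝ) : ℝ :=
  if p = ⊤ then ⨆ k, |c k| else (∑ k, |c k| ^ p.toReal) ^ (1 / p.toReal)

/-- `ℓ_p` is disjointly finitely representable in the sequence space spanned by `e`. -/
def DisjointlyFinitelyRepresentable (p : ℝ≥0∞) {X : Type*} [NormedAddCommGroup X]
    [NormedSpace ℝ X] (e : ℕ → X) : Prop :=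
  ∀ (n : ℕ) (ε : ℝ), 0 < ε → ∃ a : Fin n → ℕ → ℝ,
    (∀ k, (Function.support (a k)).Finite) ∧
    (Pairwise fun k l => Disjoint (Function.support (a k)) (Function.support (a l))) ∧
    ∀ c : Fin n → ℝ,
      (1 + ε)⁻¹ * lpNormFin p c ≤ ‖vecSum e fun i => ∑ k, c k * a k i‖ ∧
      ‖vecSum e fun i => ∑ k, c k * a k i‖ ≤ (1 + ε) * lpNormFin p c

/-- `X` is sufficiently Euclidean: `ℓ₂ⁿ`'s are uniformly complementably representable in `X`. -/
def SufficientlyEuclidean (X : Type*) [NormedAddCommGroup X] [NormedSpace ℝ X] : Prop :=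
  ∃ M : ℝ, ∀ n : ℕ, ∃ (S : X →L[ℝ] EuclideanSpace ℝ (Fin n))
    (T : EuclideanSpace ℝ (Fin n) →L[ℝ] X), (∀ v, S (T v) = v) ∧ ‖S‖ * ‖T‖ ≤ M

/-- Left dominance for an extended-real-valued Köthe norm on sequences. -/
def ENormLeftDominant (N : (ℕ → ℝ) → ℝ≥0∞) (γ : ℝ) : Prop :=
  ∀ (n : ℕ) (u v : Fin n → ℕ → ℝ),
    (∀ k, (Function.support (u k)).Finite) → (∀ k, (Function.support (v k)).Finite) →
    (Pairwise fun k l => Disjoint (Function.support (u k)) (Function.support (u l))) →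
    (Pairwise fun k l => Disjoint (Function.support (v k)) (Function.support (v l))) →
    (∀ k, ∀ i ∈ Function.support (u k), ∀ j ∈ Function.support (v k), i < j) →
    (∀ k, N (v k) ≤ N (u k)) →
    N (fun i => ∑ k, v k i) ≤ ENNReal.ofReal γ * N (fun i => ∑ k, u k i)

/-- Right dominance for an extended-real-valued Köthe norm on sequences. -/
def ENormRightDominant (N : (ℕ → ℝ) → ℝ≥0∞) (γ : ℝ) : Prop :=
  ∀ (n : ℕ) (u v : Fin n → ℕ → ℝ),
    (∀ k, (Function.support (u k)).Finite) → (∀ k, (Function.support (v k)).Finite) →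
    (Pairwise fun k l => Disjoint (Function.support (u k)) (Function.support (u l))) →
    (Pairwise fun k l => Disjoint (Function.support (v k)) (Function.support (v l))) →
    (∀ k, ∀ i ∈ Function.support (u k), ∀ j ∈ Function.support (v k), i < j) →
    (∀ k, N (u k) ≤ N (v k)) →
    N (fun i => ∑ k, u k i) ≤ ENNReal.ofReal γ * N (fun i => ∑ k, v k i)

/-- The Köthe dual norm: `‖f‖_{X*} = sup { Σ |f n g n| : ‖g‖_X ≤ 1 }`. -/
def kotheDual (N : (ℕ → ℝ) → ℝ≥0∞) : (ℕ → ℝ) → ℝ≥0∞ :=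
  fun f => ⨆ g : {g : ℕ → ℝ // N g ≤ 1}, ∑' n, ENNReal.ofReal |f n * (g : ℕ → ℝ) n|

/-- The Nakano norm of a finitely supported sequence. -/
def nakanoNormFin (p : ℕ → ℝ) (s : Finset ℕ) (a : ℕ → ℝ) : ℝ :=
  sInf {lam : ℝ | 0 < lam ∧ ∑ i ∈ s, (|a i| / lam) ^ (p i) ≤ 1}

/-- The Orlicz (Luxemburg) norm of a finitely supported sequence. -/
def orliczNormFin (F : ℝ → ℝ) (s : Finset ℕ) (a : ℕ → ℝ) : ℝ :=
  sInf {lam : ℝ | 0 < lam ∧ ∑ i ∈ s, F (|a i| / lam) ≤ 1}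

/-- The Orlicz function `F(t) ∼ t |log t|^{-a}`:
`F(t) = t^{1+a}` for `e⁻¹ ≤ t ≤ 1` and `F(t) = e^{-a} t |log t|^{-a}` for `0 < t ≤ e⁻¹`. -/
def Fone (a : ℝ) : ℝ → ℝ := fun t =>
  if t ≤ Real.exp (-1) then Real.exp (-a) * t * |Real.log t| ^ (-a) else t ^ (1 + a)

/-- The Orlicz function `F(t) ∼ t² |log t|⁻¹`:
`F(t) = t³` for `e⁻¹ ≤ t ≤ 1` and `F(t) = e⁻² t² |log t|⁻¹` for `0 < t ≤ e⁻¹`. -/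
def Ftwo : ℝ → ℝ := fun t =>
  if t ≤ Real.exp (-1) then Real.exp (-2) * t ^ (2 : ℕ) * |Real.log t|⁻¹ else t ^ (3 : ℕ)

/-- A norm on `c₀₀ = ℕ →₀ ℝ` satisfying the defining inequalities of the Tsirelson norm. -/
def IsTsiCandidate (N : (ℕ →₀ ℝ) → ℝ) : Prop :=
  (∀ x, 0 ≤ N x) ∧ (∀ (c : ℝ) (x), N (c • x) = |c| * N x) ∧
  (∀ x y, N (x + y) ≤ N x + N y) ∧
  (∀ x, ∀ i : ℕ, |x i| ≤ N x) ∧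
  (∀ (n : ℕ) (xs : Fin n → (ℕ →₀ ℝ)),
    (∀ j k : Fin n, j < k → ∀ i ∈ (xs j).support, ∀ i' ∈ (xs k).support, i < i') →
    (∀ j : Fin n, ∀ i ∈ (xs j).support, n ≤ i) →
    (1 / 2 : ℝ) * ∑ j, N (xs j) ≤ N (∑ j, xs j))

/-- The Tsirelson norm: the minimal norm on `c₀₀` dominating the sup norm and satisfying
`(1/2) Σ ‖x_j‖ ≤ ‖Σ x_j‖` for successive vectors `n ≤ supp x₁ < ⋯ < supp x_n`. -/
def IsTsirelsonNorm (N : (ℕ →₀ ℝ) → ℝ) : Prop :=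
  IsTsiCandidate N ∧ ∀ N', IsTsiCandidate N' → ∀ x, N x ≤ N' x

/-- A norm on `c₀₀` satisfying the defining inequalities of the disjoint-version Tsirelson
norm `‖·‖_T^#`. -/
def IsTsiSharpCandidate (N : (ℕ →₀ ℝ) → ℝ) : Prop :=
  (∀ x, 0 ≤ N x) ∧ (∀ (c : ℝ) (x), N (c • x) = |c| * N x) ∧
  (∀ x y, N (x + y) ≤ N x + N y) ∧
  (∀ x, ∀ i : ℕ, |x i| ≤ N x) ∧
  (∀ (n : ℕ) (xs : Fin (2 * n) → (ℕ →₀ ℝ)),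
    (Pairwise fun j k => Disjoint (xs j).support (xs k).support) →
    (∀ j, ∀ i ∈ (xs j).support, n ≤ i) →
    (1 / 2 : ℝ) * ∑ j, N (xs j) ≤ N (∑ j, xs j))

/-- The norm `‖·‖_T^#`: the least norm on `c₀₀` dominating the sup norm and satisfying
`(1/2) Σ_{j=1}^{2n} ‖x_j‖ ≤ ‖Σ x_j‖` for `2n` disjointly supported vectors with
`min supp x_j ≥ n`. -/
def IsTsirelsonSharpNorm (N : (ℕ →₀ ℝ) → ℝ) : Prop :=
  IsTsiSharpCandidate N ∧ ∀ N', IsTsiSharpCandidate N' → ∀ x, N x ≤ N' x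

open scoped Classical in
/-- `V(A)`: the set of `j` such that for some `i ∈ A` and some `k`, `(i,k) ∈ G` and
`(j,k) ∈ G`. -/
def Vstep (n : ℕ) (G : Finset (Fin n × Fin n)) (A : Finset (Fin n)) : Finset (Fin n) :=
  Finset.univ.filter fun j => ∃ i ∈ A, ∃ k, (i, k) ∈ G ∧ (j, k) ∈ G

open scoped Classical in
/-- `G^r`: the set of pairs `(i,j)` such that `(k,j) ∈ G` for some `k ∈ V^r({i})`. -/
def Gpow (n : ℕ) (G : Finset (Fin n × Fin n)) (r : ℕ) : Finset (Fin n × Fin n) :=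
  Finset.univ.filter fun p => ∃ k, (k, p.2) ∈ G ∧ k ∈ (Vstep n G)^[r] {p.1}

/-- A family of finite-dimensional sequence spaces (given by normalized monotone bases `b i`)
is sufficiently lattice Euclidean. -/
def SuffLatticeEuclideanFam {ι : Type*} {E : ι → Type*} [∀ i, NormedAddCommGroup (E i)]
    [∀ i, NormedSpace ℝ (E i)] {n : ι → ℕ} (b : ∀ i, Fin (n i) → E i) : Prop :=
  ∃ M : ℝ, ∀ m : ℕ, ∃ i : ι, ∃ (S : E i →L[ℝ] EuclideanSpace ℝ (Fin m))
    (T : EuclideanSpace ℝ (Fin m) →L[ℝ] E i),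
    (∀ v, S (T v) = v) ∧ ‖S‖ * ‖T‖ ≤ M ∧
    ∀ (a c : Fin (n i) → ℝ) (k : Fin m),
      S (∑ j, max (a j) (c j) • b i j) k =
        max (S (∑ j, a j • b i j) k) (S (∑ j, c j • b i j) k)

end CK

namespace CK

section Statement16Aux

variable {X : Type*} [NormedAddCommGroup X] [NormedSpace ℝ X]

lemma vecSum_eq_sum (e : ℕ → X) (a : ℕ → ℝ) (s : Finset ℕ) (h : Function.support a ⊆ ↑s) :
    vecSum e a = ∑ i ∈ s, a i • e i := by
  refine finsum_eq_sum_of_support_subset _ (subset_trans ?_ h)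
  intro i hi
  simp only [Function.mem_support] at hi ⊢
  intro h0; exact hi (by simp [h0])

lemma vecSum_zero' (e : ℕ → X) : vecSum e (fun _ => 0) = 0 := by
  simp [vecSum]

lemma vecSum_smul (e : ℕ → X) (a : ℕ → ℝ) (lam : ℝ) (ha : (Function.support a).Finite) :
    vecSum e (fun i => lam * a i) = lam • vecSum e a := by
  unfold vecSum
  rw [smul_finsum' lam (f := fun i => a i • e i)
    (ha.subset (by intro i hi; simp only [Function.mem_support] at hi ⊢
                   intro h0; exact hi (by simp [h0])))]
  exact finsum_congr fun i => (smul_smul lam (a i) (e i)).symm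

lemma norm_vecSum_smul (e : ℕ → X) (a : ℕ → ℝ) {lam : ℝ} (hlam : 0 ≤ lam)
    (ha : (Function.support a).Finite) :
    ‖vecSum e (fun i => lam * a i)‖ = lam * ‖vecSum e a‖ := by
  rw [vecSum_smul e a lam ha, norm_smul, Real.norm_eq_abs, abs_of_nonneg hlam]

lemma lpNormFin_nonneg (p : ℝ≥0∞) {n : ℕ} (c : Fin n → ℝ) : 0 ≤ lpNormFin p c := by
  unfold lpNormFin
  split
  · exact Real.iSup_nonneg fun k => abs_nonneg _
  · exact Real.rpow_nonneg (Finset.sum_nonneg fun k _ => Real.rpow_nonneg (abs_nonneg _) _) _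

lemma lpNormFin_empty (p : ℝ≥0∞) (hp : p ≠ 0) (c : Fin 0 → ℝ) : lpNormFin p c = 0 := by
  unfold lpNormFin
  split
  · exact Real.iSup_of_isEmpty _
  · rename_i htop
    rw [Finset.univ_eq_empty, Finset.sum_empty,
      Real.zero_rpow (one_div_ne_zero (ENNReal.toReal_ne_zero.mpr ⟨hp, htop⟩))]

lemma lpNormFin_smul (p : ℝ≥0∞) (hp : p ≠ 0) {n : ℕ} (c : Fin n → ℝ) {lam : ℝ}
    (hlam : 0 ≤ lam) :
    lpNormFin p (fun k => lam * c k) = lam * lpNormFin p c := by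
  unfold lpNormFin
  split
  · rw [Real.mul_iSup_of_nonneg hlam]
    exact iSup_congr fun k => by rw [abs_mul, abs_of_nonneg hlam]
  · rename_i htop
    have hq : 0 < p.toReal := ENNReal.toReal_pos hp htop
    have h1 : ∀ k : Fin n, |lam * c k| ^ p.toReal = lam ^ p.toReal * |c k| ^ p.toReal := by
      intro k
      rw [abs_mul, abs_of_nonneg hlam, Real.mul_rpow hlam (abs_nonneg _)]
    simp only [h1]
    rw [← Finset.mul_sum,
      Real.mul_rpow (Real.rpow_nonneg hlam _)
        (Finset.sum_nonneg fun k _ => Real.rpow_nonneg (abs_nonneg _) _),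
      ← Real.rpow_mul hlam, mul_one_div, div_self hq.ne', Real.rpow_one]

lemma lpNormFin_basis (p : ℝ≥0∞) (hp : p ≠ 0) {n : ℕ} (j : Fin n) :
    lpNormFin p (fun k => if k = j then (1:ℝ) else 0) = 1 := by
  have : Nonempty (Fin n) := ⟨j⟩
  unfold lpNormFin
  split
  · refine le_antisymm (ciSup_le fun k => ?_) ?_
    · by_cases hk : k = j <;> simp [hk]
    · refine le_trans ?_ (le_ciSup (Set.Finite.bddAbove (Set.finite_range _)) j)
      simp
  · rename_i htop
    have hq : p.toReal ≠ 0 := ENNReal.toReal_ne_zero.mpr ⟨hp, htop⟩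
    have h1 : ∀ k : Fin n, |if k = j then (1:ℝ) else 0| ^ p.toReal
        = if k = j then (1:ℝ) else 0 := by
      intro k; split <;> simp [Real.zero_rpow hq]
    simp only [h1, Finset.sum_ite_eq', Finset.mem_univ, if_true, Real.one_rpow]

lemma lpNormFin_extend (p : ℝ≥0∞) (hp : p ≠ 0) {n m : ℕ} (hn : n ≠ 0) {ι : Fin n → Fin m}
    (hι : Function.Injective ι) (s : Fin n → ℝ) :
    lpNormFin p (Function.extend ι s 0) = lpNormFin p s := by
  have hne : Nonempty (Fin n) := ⟨⟨0, Nat.pos_of_ne_zero hn⟩⟩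
  have hme : Nonempty (Fin m) := ⟨ι hne.some⟩
  have hext0 : ∀ j : Fin m, j ∉ Set.range ι → Function.extend ι s 0 j = 0 := by
    intro j hj
    rw [Function.extend_apply' _ _ _ (by simpa [Set.mem_range] using hj)]; rfl
  unfold lpNormFin
  split
  · refine le_antisymm (ciSup_le fun j => ?_) (ciSup_le fun k => ?_)
    · by_cases hj : j ∈ Set.range ι
      · obtain ⟨k, rfl⟩ := hj
        rw [hι.extend_apply s 0 k]
        exact le_ciSup (f := fun k => |s k|) (Set.Finite.bddAbove (Set.finite_range _)) k
      · rw [hext0 j hj, abs_zero]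
        exact Real.iSup_nonneg fun k => abs_nonneg _
    · rw [← hι.extend_apply s 0 k]
      exact le_ciSup (f := fun j => |Function.extend ι s 0 j|)
        (Set.Finite.bddAbove (Set.finite_range _)) (ι k)
  · rename_i htop
    have hq : p.toReal ≠ 0 := ENNReal.toReal_ne_zero.mpr ⟨hp, htop⟩
    congr 1
    have h2 : ∑ j : Fin m, |Function.extend ι s 0 j| ^ p.toReal
        = ∑ j ∈ Finset.univ.image ι, |Function.extend ι s 0 j| ^ p.toReal := by
      refine (Finset.sum_subset (Finset.subset_univ _) ?_).symm
      intro j _ hj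
      rw [hext0 j (by simpa using hj), abs_zero, Real.zero_rpow hq]
    rw [h2, Finset.sum_image (fun x _ y _ h => hι h)]
    exact Finset.sum_congr rfl fun k _ => by rw [hι.extend_apply]

lemma sum_extend_mul {m n : ℕ} {ι : Fin n → Fin m} (hι : Function.Injective ι)
    (s : Fin n → ℝ) (b : Fin m → ℕ → ℝ) (i : ℕ) :
    ∑ j, Function.extend ι s 0 j * b j i = ∑ k, s k * b (ι k) i := by
  have h2 : ∑ j : Fin m, Function.extend ι s 0 j * b j i
      = ∑ j ∈ Finset.univ.image ι, Function.extend ι s 0 j * b j i := by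
    refine (Finset.sum_subset (Finset.subset_univ _) ?_).symm
    intro j _ hj
    rw [Function.extend_apply' _ _ _ (by simpa using hj)]
    simp
  rw [h2, Finset.sum_image (fun x _ y _ h => hι h)]
  exact Finset.sum_congr rfl fun k _ => by rw [hι.extend_apply]

lemma exists_far_subfamily (n N : ℕ) (a : Fin (n + (N+1)) → ℕ → ℝ)
    (hd : Pairwise fun k l => Disjoint (Function.support (a k)) (Function.support (a l))) :
    ∃ ι : Fin n → Fin (n + (N+1)), Function.Injective ι ∧
      ∀ k, ∀ i ∈ Function.support (a (ι k)), N < i := by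
  classical
  set S : Finset (Fin (n + (N+1))) :=
    Finset.univ.filter (fun j => ∃ i ∈ Function.support (a j), i ≤ N) with hS
  have hcard : S.card ≤ N + 1 := by
    have hw : ∀ j ∈ S, (if h : ∃ i ∈ Function.support (a j), i ≤ N then h.choose else 0)
        ∈ Finset.range (N+1) := by
      intro j hj
      simp only [hS, Finset.mem_filter] at hj
      rw [dif_pos hj.2]
      exact Finset.mem_range.mpr (Nat.lt_succ_of_le hj.2.choose_spec.2)
    have := Finset.card_le_card_of_injOn _ hw ?_
    · simpa using this
    · intro j hj j' hj' heq
      simp only [hS, Finset.coe_filter, Set.mem_setOf_eq] at hj hj'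
      simp only [dif_pos hj.2, dif_pos hj'.2] at heq
      by_contra hne
      have h1 := hj.2.choose_spec.1
      have h2 := hj'.2.choose_spec.1
      rw [heq] at h1
      exact Set.disjoint_left.mp (hd hne) h1 h2
  have hcompl : n ≤ (Finset.univ \ S).card := by
    rw [Finset.card_sdiff_of_subset (Finset.subset_univ _), Finset.card_univ, Fintype.card_fin]
    omega
  obtain ⟨t, hts, htc⟩ := Finset.exists_subset_card_eq hcompl
  refine ⟨fun k => (t.orderIsoOfFin htc k : Fin (n + (N+1))), ?_, ?_⟩
  · intro k l hkl
    exact (t.orderIsoOfFin htc).injective (Subtype.ext hkl)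
  · intro k i hi
    have hmem : ((t.orderIsoOfFin htc k : Fin (n + (N+1)))) ∈ Finset.univ \ S :=
      hts (t.orderIsoOfFin htc k).2
    simp only [Finset.mem_sdiff, hS, Finset.mem_filter, Finset.mem_univ, true_and,
      not_exists, not_and, not_le] at hmem
    exact hmem i hi

end Statement16Aux

section Statement16Aux2

variable {X : Type*} [NormedAddCommGroup X] [NormedSpace ℝ X]

lemma sup_support_bound {n : ℕ} {a : Fin n → ℕ → ℝ}
    (ha : ∀ k, (Function.support (a k)).Finite) :
    ∀ k, ∀ i ∈ Function.support (a k),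
      i ≤ Finset.univ.sup (fun k => ((ha k).toFinset.sup id)) := by
  intro k i hi
  exact le_trans (Finset.le_sup (f := id) ((ha k).mem_toFinset.mpr hi))
    (Finset.le_sup (f := fun k => ((ha k).toFinset.sup id)) (Finset.mem_univ k))

lemma norm_bound_of_rep (e : ℕ → X) (p : ℝ≥0∞) (hp0 : p ≠ 0) {m : ℕ} {b : Fin m → ℕ → ℝ}
    (hb : ∀ c : Fin m → ℝ,
      (1+1:ℝ)⁻¹ * lpNormFin p c ≤ ‖vecSum e fun i => ∑ k, c k * b k i‖ ∧
      ‖vecSum e fun i => ∑ k, c k * b k i‖ ≤ (1+1) * lpNormFin p c) (j : Fin m) :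
    (1:ℝ)/2 ≤ ‖vecSum e (b j)‖ ∧ ‖vecSum e (b j)‖ ≤ 2 := by
  have heq : (fun i => ∑ k, (if k = j then (1:ℝ) else 0) * b k i) = b j := by
    funext i; simp
  have h : (1+1:ℝ)⁻¹ * lpNormFin p (fun k => if k = j then (1:ℝ) else 0)
      ≤ ‖vecSum e (b j)‖ ∧
      ‖vecSum e (b j)‖ ≤ (1+1) * lpNormFin p (fun k => if k = j then (1:ℝ) else 0) := by
    rw [← heq]; exact hb _
  rw [lpNormFin_basis p hp0 j] at h
  norm_num at h
  exact h

lemma scaled_facts (e : ℕ → X) {n m : ℕ} {ι : Fin n → Fin m} (hι : Function.Injective ι)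
    {b : Fin m → ℕ → ℝ} (hbfin : ∀ j, (Function.support (b j)).Finite)
    (hbdisj : Pairwise fun k l => Disjoint (Function.support (b k)) (Function.support (b l)))
    {s : Fin n → ℝ} (hs : ∀ k, 0 ≤ s k) :
    (∀ k, Function.support (fun i => s k * b (ι k) i) ⊆ Function.support (b (ι k))) ∧
    (∀ k, (Function.support (fun i => s k * b (ι k) i)).Finite) ∧
    (Pairwise fun k l => Disjoint (Function.support (fun i => s k * b (ι k) i))
      (Function.support (fun i => s l * b (ι l) i))) ∧
    (∀ k, ‖vecSum e (fun i => s k * b (ι k) i)‖ = s k * ‖vecSum e (b (ι k))‖) := by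
  have hsupp : ∀ k, Function.support (fun i => s k * b (ι k) i)
      ⊆ Function.support (b (ι k)) := by
    intro k i hi
    simp only [Function.mem_support] at hi ⊢
    exact fun h0 => hi (by rw [h0, mul_zero])
  refine ⟨hsupp, fun k => (hbfin (ι k)).subset (hsupp k), ?_,
    fun k => norm_vecSum_smul e (b (ι k)) (hs k) (hbfin (ι k))⟩
  intro k l hkl
  exact (hbdisj (hι.ne hkl)).mono (hsupp k) (hsupp l)

end Statement16Aux2

/-- Lemma 5.2. Let `X` be a left- (resp. right-) dominant sequence space in
which `ℓ_p` is disjointly finitely representable. Then (1) `X` satisfies a lower (resp. upper)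
`p`-estimate for disjoint vectors, and (2) there is a constant `K` such that for every `n`
there is `N` such that the tail space `X_N` satisfies an upper (resp. lower) `p`-estimate with
constant `K` on any `n` disjointly supported vectors. -/
theorem statement16
    {X : Type*} [NormedAddCommGroup X] [NormedSpace ℝ X] [CompleteSpace X]
    (e : ℕ → X) (he : IsUnconditionalBasis e) (hone : ∀ j, ‖e j‖ = 1)
    (hlat : ∀ a b : ℕ → ℝ, (Function.support a).Finite → (Function.support b).Finite →
      (∀ i, |a i| ≤ |b i|) → ‖vecSum e a‖ ≤ ‖vecSum e b‖)
    (p : ℝ≥0∞) (hrep : DisjointlyFinitelyRepresentable p e) :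
    (IsLeftDominant e →
      (∃ c : ℝ, 0 < c ∧ ∀ (n : ℕ) (a : Fin n → ℕ → ℝ),
        (∀ k, (Function.support (a k)).Finite) →
        (Pairwise fun k l => Disjoint (Function.support (a k)) (Function.support (a l))) →
        c * lpNormFin p (fun k => ‖vecSum e (a k)‖) ≤ ‖vecSum e fun i => ∑ k, a k i‖) ∧
      (∃ K : ℝ, ∀ n : ℕ, ∃ M : ℕ, ∀ a : Fin n → ℕ → ℝ,
        (∀ k, (Function.support (a k)).Finite) →
        (Pairwise fun k l => Disjoint (Function.support (a k)) (Function.support (a l))) →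
        (∀ k, ∀ i ∈ Function.support (a k), M < i) →
        ‖vecSum e fun i => ∑ k, a k i‖ ≤ K * lpNormFin p (fun k => ‖vecSum e (a k)‖))) ∧
    (IsRightDominant e →
      (∃ C : ℝ, ∀ (n : ℕ) (a : Fin n → ℕ → ℝ),
        (∀ k, (Function.support (a k)).Finite) →
        (Pairwise fun k l => Disjoint (Function.support (a k)) (Function.support (a l))) →
        ‖vecSum e fun i => ∑ k, a k i‖ ≤ C * lpNormFin p (fun k => ‖vecSum e (a k)‖)) ∧
      (∃ K : ℝ, 0 < K ∧ ∀ n : ℕ, ∃ M : ℕ, ∀ a : Fin n → ℕ → ℝ,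
        (∀ k, (Function.support (a k)).Finite) →
        (Pairwise fun k l => Disjoint (Function.support (a k)) (Function.support (a l))) →
        (∀ k, ∀ i ∈ Function.support (a k), M < i) →
        K * lpNormFin p (fun k => ‖vecSum e (a k)‖) ≤ ‖vecSum e fun i => ∑ k, a k i‖)) := by
  classical
  by_cases hp0 : p = 0
  · exfalso
    obtain ⟨b, -, -, hb⟩ := hrep 1 1 one_pos
    have h := (hb (fun _ => 0)).1
    have hz : (fun i => ∑ k : Fin 1, (fun _ => (0:ℝ)) k * b k i) = fun _ => (0:ℝ) := by
      funext i; simp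
    rw [hz, vecSum_zero', norm_zero] at h
    have hlp : lpNormFin p (fun _ : Fin 1 => (0:ℝ)) = 1 := by
      subst hp0
      simp [lpNormFin]
    rw [hlp] at h
    norm_num at h
  constructor
  · -- left-dominant case
    rintro ⟨γ, hγ1, hld⟩
    have hγ : (0:ℝ) < γ := lt_of_lt_of_le one_pos hγ1
    constructor
    · -- lower p-estimate
      refine ⟨(8*γ)⁻¹, inv_pos.mpr (by linarith), ?_⟩
      intro n a ha hd
      rcases Nat.eq_zero_or_pos n with hn | hn
      · subst hn
        rw [lpNormFin_empty p hp0, mul_zero]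
        exact norm_nonneg _
      have hn0 : n ≠ 0 := hn.ne'
      have hNa := sup_support_bound ha
      set N := Finset.univ.sup (fun k => ((ha k).toFinset.sup id)) with hNdef
      obtain ⟨b, hbfin, hbdisj, hb⟩ := hrep (n + (N+1)) 1 one_pos
      obtain ⟨ι, hι, hfar⟩ := exists_far_subfamily n N b hbdisj
      have hbnorm := norm_bound_of_rep e p hp0 hb
      have hs0 : ∀ k : Fin n, 0 ≤ 4⁻¹ * ‖vecSum e (a k)‖ := fun k => by positivity
      obtain ⟨hsupp, hvfin, hvdisj, hvnorm⟩ := scaled_facts e hι hbfin hbdisj hs0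
      have horder : ∀ k, ∀ i ∈ Function.support (a k),
          ∀ j ∈ Function.support (fun i => (4⁻¹ * ‖vecSum e (a k)‖) * b (ι k) i), i < j := by
        intro k i hi j hj
        exact lt_of_le_of_lt (hNa k i hi) (hfar k j (hsupp k hj))
      have hvle : ∀ k, ‖vecSum e (fun i => (4⁻¹ * ‖vecSum e (a k)‖) * b (ι k) i)‖
          ≤ ‖vecSum e (a k)‖ := by
        intro k
        rw [hvnorm k]
        have h2 := (hbnorm (ι k)).2
        have ht0 : (0:ℝ) ≤ ‖vecSum e (a k)‖ := norm_nonneg _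
        nlinarith
      have hdom : ‖vecSum e fun i => ∑ k, (4⁻¹ * ‖vecSum e (a k)‖) * b (ι k) i‖
          ≤ γ * ‖vecSum e fun i => ∑ k, a k i‖ :=
        hld n a (fun k i => (4⁻¹ * ‖vecSum e (a k)‖) * b (ι k) i) ha hvfin hd hvdisj
          horder hvle
      have hlow : (1+1:ℝ)⁻¹ *
          lpNormFin p (Function.extend ι (fun k => 4⁻¹ * ‖vecSum e (a k)‖) 0)
          ≤ ‖vecSum e fun i => ∑ k, (4⁻¹ * ‖vecSum e (a k)‖) * b (ι k) i‖ := by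
        have heq : (fun i => ∑ j, Function.extend ι (fun k => 4⁻¹ * ‖vecSum e (a k)‖) 0 j
            * b j i) = fun i => ∑ k, (4⁻¹ * ‖vecSum e (a k)‖) * b (ι k) i := by
          funext i; exact sum_extend_mul hι _ b i
        have h := (hb (Function.extend ι (fun k => 4⁻¹ * ‖vecSum e (a k)‖) 0)).1
        rw [heq] at h
        exact h
      rw [lpNormFin_extend p hp0 hn0 hι _] at hlow
      have hls : lpNormFin p (fun k => 4⁻¹ * ‖vecSum e (a k)‖)
          = 4⁻¹ * lpNormFin p (fun k => ‖vecSum e (a k)‖) :=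
        lpNormFin_smul p hp0 _ (by norm_num)
      rw [hls] at hlow
      rw [inv_mul_le_iff₀ (by positivity)]
      nlinarith [hlow, hdom]
    · -- upper p-estimate on tails
      refine ⟨8*γ, ?_⟩
      intro n
      rcases Nat.eq_zero_or_pos n with hn | hn
      · refine ⟨0, ?_⟩
        subst hn
        intro a ha hd hM
        have hz : (fun i => ∑ k : Fin 0, a k i) = fun _ => (0:ℝ) := by funext i; simp
        rw [hz, vecSum_zero', norm_zero]
        have h0 := lpNormFin_nonneg p (fun k : Fin 0 => ‖vecSum e (a k)‖)
        positivity
      have hn0 : n ≠ 0 := hn.ne'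
      obtain ⟨b, hbfin, hbdisj, hb⟩ := hrep n 1 one_pos
      have hMb := sup_support_bound hbfin
      refine ⟨Finset.univ.sup (fun k => ((hbfin k).toFinset.sup id)), ?_⟩
      intro a ha hd hM
      have hbnorm := norm_bound_of_rep e p hp0 hb
      have hs0 : ∀ k : Fin n, 0 ≤ 2 * ‖vecSum e (a k)‖ := fun k => by positivity
      obtain ⟨hsupp, hufin, hudisj, hunorm⟩ :=
        scaled_facts e (ι := id) Function.injective_id hbfin hbdisj hs0
      have horder : ∀ k, ∀ i ∈ Function.support (fun i => (2 * ‖vecSum e (a k)‖) * b k i),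
          ∀ j ∈ Function.support (a k), i < j := by
        intro k i hi j hj
        exact lt_of_le_of_lt (hMb k i (hsupp k hi)) (hM k j hj)
      have huge : ∀ k, ‖vecSum e (a k)‖
          ≤ ‖vecSum e (fun i => (2 * ‖vecSum e (a k)‖) * b k i)‖ := by
        intro k
        have h1 : ‖vecSum e (fun i => (2 * ‖vecSum e (a k)‖) * b k i)‖
            = (2 * ‖vecSum e (a k)‖) * ‖vecSum e (b k)‖ := hunorm k
        rw [h1]
        have h2 := (hbnorm k).1
        have ht0 : (0:ℝ) ≤ ‖vecSum e (a k)‖ := norm_nonneg _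
        nlinarith
      have hdom : ‖vecSum e fun i => ∑ k, a k i‖
          ≤ γ * ‖vecSum e fun i => ∑ k, (2 * ‖vecSum e (a k)‖) * b k i‖ :=
        hld n (fun k i => (2 * ‖vecSum e (a k)‖) * b k i) a hufin ha hudisj hd
          horder huge
      have hup : ‖vecSum e fun i => ∑ k, (2 * ‖vecSum e (a k)‖) * b k i‖
          ≤ (1+1) * lpNormFin p (fun k => 2 * ‖vecSum e (a k)‖) := (hb _).2
      have hls : lpNormFin p (fun k => 2 * ‖vecSum e (a k)‖)
          = 2 * lpNormFin p (fun k => ‖vecSum e (a k)‖) :=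
        lpNormFin_smul p hp0 _ (by norm_num)
      rw [hls] at hup
      have hlpnn := lpNormFin_nonneg p (fun k => ‖vecSum e (a k)‖)
      nlinarith [hdom, hup, mul_le_mul_of_nonneg_left hup hγ.le]
  · -- right-dominant case
    rintro ⟨γ, hγ1, hrd⟩
    have hγ : (0:ℝ) < γ := lt_of_lt_of_le one_pos hγ1
    constructor
    · -- upper p-estimate
      refine ⟨8*γ, ?_⟩
      intro n a ha hd
      rcases Nat.eq_zero_or_pos n with hn | hn
      · subst hn
        have hz : (fun i => ∑ k : Fin 0, a k i) = fun _ => (0:ℝ) := by funext i; simp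
        rw [hz, vecSum_zero', norm_zero]
        have h0 := lpNormFin_nonneg p (fun k : Fin 0 => ‖vecSum e (a k)‖)
        positivity
      have hn0 : n ≠ 0 := hn.ne'
      have hNa := sup_support_bound ha
      set N := Finset.univ.sup (fun k => ((ha k).toFinset.sup id)) with hNdef
      obtain ⟨b, hbfin, hbdisj, hb⟩ := hrep (n + (N+1)) 1 one_pos
      obtain ⟨ι, hι, hfar⟩ := exists_far_subfamily n N b hbdisj
      have hbnorm := norm_bound_of_rep e p hp0 hb
      have hs0 : ∀ k : Fin n, 0 ≤ 2 * ‖vecSum e (a k)‖ := fun k => by positivity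
      obtain ⟨hsupp, hvfin, hvdisj, hvnorm⟩ := scaled_facts e hι hbfin hbdisj hs0
      have horder : ∀ k, ∀ i ∈ Function.support (a k),
          ∀ j ∈ Function.support (fun i => (2 * ‖vecSum e (a k)‖) * b (ι k) i), i < j := by
        intro k i hi j hj
        exact lt_of_le_of_lt (hNa k i hi) (hfar k j (hsupp k hj))
      have hvge : ∀ k, ‖vecSum e (a k)‖
          ≤ ‖vecSum e (fun i => (2 * ‖vecSum e (a k)‖) * b (ι k) i)‖ := by
        intro k
        rw [hvnorm k]
        have h2 := (hbnorm (ι k)).1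
        have ht0 : (0:ℝ) ≤ ‖vecSum e (a k)‖ := norm_nonneg _
        nlinarith
      have hdom : ‖vecSum e fun i => ∑ k, a k i‖
          ≤ γ * ‖vecSum e fun i => ∑ k, (2 * ‖vecSum e (a k)‖) * b (ι k) i‖ :=
        hrd n a (fun k i => (2 * ‖vecSum e (a k)‖) * b (ι k) i) ha hvfin hd hvdisj
          horder hvge
      have hup : ‖vecSum e fun i => ∑ k, (2 * ‖vecSum e (a k)‖) * b (ι k) i‖
          ≤ (1+1) * lpNormFin p (Function.extend ι (fun k => 2 * ‖vecSum e (a k)‖) 0) := by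
        have heq : (fun i => ∑ j, Function.extend ι (fun k => 2 * ‖vecSum e (a k)‖) 0 j
            * b j i) = fun i => ∑ k, (2 * ‖vecSum e (a k)‖) * b (ι k) i := by
          funext i; exact sum_extend_mul hι _ b i
        have h := (hb (Function.extend ι (fun k => 2 * ‖vecSum e (a k)‖) 0)).2
        rw [heq] at h
        exact h
      rw [lpNormFin_extend p hp0 hn0 hι _] at hup
      have hls : lpNormFin p (fun k => 2 * ‖vecSum e (a k)‖)
          = 2 * lpNormFin p (fun k => ‖vecSum e (a k)‖) :=
        lpNormFin_smul p hp0 _ (by norm_num)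
      rw [hls] at hup
      have hlpnn := lpNormFin_nonneg p (fun k => ‖vecSum e (a k)‖)
      nlinarith [hdom, hup, mul_le_mul_of_nonneg_left hup hγ.le]
    · -- lower p-estimate on tails
      refine ⟨(8*γ)⁻¹, inv_pos.mpr (by linarith), ?_⟩
      intro n
      rcases Nat.eq_zero_or_pos n with hn | hn
      · refine ⟨0, ?_⟩
        subst hn
        intro a ha hd hM
        rw [lpNormFin_empty p hp0, mul_zero]
        exact norm_nonneg _
      have hn0 : n ≠ 0 := hn.ne'
      obtain ⟨b, hbfin, hbdisj, hb⟩ := hrep n 1 one_pos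
      have hMb := sup_support_bound hbfin
      refine ⟨Finset.univ.sup (fun k => ((hbfin k).toFinset.sup id)), ?_⟩
      intro a ha hd hM
      have hbnorm := norm_bound_of_rep e p hp0 hb
      have hs0 : ∀ k : Fin n, 0 ≤ 4⁻¹ * ‖vecSum e (a k)‖ := fun k => by positivity
      obtain ⟨hsupp, hufin, hudisj, hunorm⟩ :=
        scaled_facts e (ι := id) Function.injective_id hbfin hbdisj hs0
      have horder : ∀ k, ∀ i ∈ Function.support (fun i => (4⁻¹ * ‖vecSum e (a k)‖) * b k i),
          ∀ j ∈ Function.support (a k), i < j := by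
        intro k i hi j hj
        exact lt_of_le_of_lt (hMb k i (hsupp k hi)) (hM k j hj)
      have hule : ∀ k, ‖vecSum e (fun i => (4⁻¹ * ‖vecSum e (a k)‖) * b k i)‖
          ≤ ‖vecSum e (a k)‖ := by
        intro k
        have h1 : ‖vecSum e (fun i => (4⁻¹ * ‖vecSum e (a k)‖) * b k i)‖
            = (4⁻¹ * ‖vecSum e (a k)‖) * ‖vecSum e (b k)‖ := hunorm k
        rw [h1]
        have h2 := (hbnorm k).2
        have ht0 : (0:ℝ) ≤ ‖vecSum e (a k)‖ := norm_nonneg _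
        nlinarith
      have hdom : ‖vecSum e fun i => ∑ k, (4⁻¹ * ‖vecSum e (a k)‖) * b k i‖
          ≤ γ * ‖vecSum e fun i => ∑ k, a k i‖ :=
        hrd n (fun k i => (4⁻¹ * ‖vecSum e (a k)‖) * b k i) a hufin ha hudisj hd
          horder hule
      have hlow : (1+1:ℝ)⁻¹ * lpNormFin p (fun k => 4⁻¹ * ‖vecSum e (a k)‖)
          ≤ ‖vecSum e fun i => ∑ k, (4⁻¹ * ‖vecSum e (a k)‖) * b k i‖ := (hb _).1
      have hls : lpNormFin p (fun k => 4⁻¹ * ‖vecSum e (a k)‖)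
          = 4⁻¹ * lpNormFin p (fun k => ‖vecSum e (a k)‖) :=
        lpNormFin_smul p hp0 _ (by norm_num)
      rw [hls] at hlow
      rw [inv_mul_le_iff₀ (by positivity)]
      nlinarith [hlow, hdom]

end CK
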